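/- For an integer k ≥ 1 and c ≥ 0, let α(k,c) := E[(X_c+2k)^{−1}] where X_c is a Poisson random variable with mean c, and define m(k,c) := (1 + 2·(α(k,c)^{−k} − 1)/(1 − α(k,c)))·c for c > 0 and m(k,0) := 0. Then, as a function of c, m(k,·) is right-continuous on [0,∞), non-decreasing, and m(k,0) = 0; consequently there exists c₁(k) > 0 such that m(k,c) < 1 for all 0 ≤ c < c₁(k). -/

import Mathlib

open Filter
open scoped ENNReal Topology Classical

noncomputable section

/-- `α = E[(X+2k)⁻¹]`, where `X` is a Poisson random variable with mean `c`. -/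
def alphaP (k : ℕ) (c : ℝ) : ℝ :=
  ∑' m : ℕ, (Real.exp (-c) * c ^ m / (Nat.factorial m)) * ((m : ℝ) + 2 * k)⁻¹

/-- the mean offspring `m(k,c)` of the dominating Galton–Watson process -/
def mfun (k : ℕ) (c : ℝ) : ℝ :=
  (1 + 2 * (((alphaP k c) ^ k)⁻¹ - 1) / (1 - alphaP k c)) * c

/-!
Write `α(k,c) = E f(X_c)` with `f n = (n + 2k)⁻¹`, which is bounded, positive and nonincreasing.
Poisson expectations of bounded observables are continuous in `c`, the series converging locally
uniformly, and for nonincreasing nonnegative observables they are nonincreasing in `c`, since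
`X_{c+d}` has the law of `X_c + X_d` with `X_c, X_d` independent. As `0 < α ≤ 1/2`, summing the
geometric series gives `m(k,c) = (1 + 2 ∑_{j<k} α^{-(j+1)}) c`, a nonnegative nondecreasing factor
times `c`. Right-continuity at `0` together with `m(k,0) = 0` yields `c₁`.
-/

open Finset

def poissonWeight (c : ℝ) (n : ℕ) : ℝ := Real.exp (-c) * c ^ n / n.factorial

def poissonExpect (f : ℕ → ℝ) (c : ℝ) : ℝ := ∑' n, poissonWeight c n * f n

lemma hasSum_poissonWeight (c : ℝ) : HasSum (poissonWeight c) 1 := by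
  have h := (NormedSpace.expSeries_div_hasSum_exp c).mul_left (Real.exp (-c))
  rw [← Real.exp_eq_exp_ℝ, ← Real.exp_add, neg_add_cancel, Real.exp_zero] at h
  exact h.congr_fun fun _ => mul_div_assoc _ _ _

lemma poissonWeight_nonneg {c : ℝ} (hc : 0 ≤ c) (n : ℕ) : 0 ≤ poissonWeight c n := by
  unfold poissonWeight; positivity

lemma abs_poissonWeight_le {c R : ℝ} (hc : |c| ≤ R) (n : ℕ) :
    |poissonWeight c n| ≤ Real.exp R * (R ^ n / n.factorial) := by
  rw [poissonWeight, abs_div, abs_mul, abs_pow, Real.abs_exp, Nat.abs_cast, mul_div_assoc]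
  gcongr
  exact (neg_le_abs c).trans hc

lemma poissonWeight_add (c d : ℝ) (n : ℕ) :
    poissonWeight (c + d) n =
      ∑ ij ∈ antidiagonal n, poissonWeight c ij.1 * poissonWeight d ij.2 := by
  rw [poissonWeight, (Commute.all c d).add_pow', mul_sum, sum_div]
  refine sum_congr rfl fun ij hij => ?_
  obtain ⟨i, j⟩ := ij
  obtain rfl : i + j = n := mem_antidiagonal.mp hij
  have hfact : ((i + j).choose i * i.factorial * j.factorial : ℝ) = (i + j).factorial := by
    rw [Nat.choose_symm_add]; exact_mod_cast Nat.add_choose_mul_factorial_mul_factorial i j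
  have hchoose : ((i + j).choose i : ℝ) ≠ 0 :=
    Nat.cast_ne_zero.2 (Nat.choose_pos (Nat.le_add_right i j)).ne'
  rw [poissonWeight, poissonWeight, ← hfact, neg_add, Real.exp_add, nsmul_eq_mul]
  field_simp

section BoundedObservable

variable {f : ℕ → ℝ} {B c : ℝ}

lemma summable_poissonWeight_mul (hf : ∀ n, |f n| ≤ B) (hc : 0 ≤ c) :
    Summable fun n => poissonWeight c n * f n := by
  refine .of_norm_bounded ((hasSum_poissonWeight c).summable.mul_right B) fun n => ?_
  rw [Real.norm_eq_abs, abs_mul, abs_of_nonneg (poissonWeight_nonneg hc n)]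
  exact mul_le_mul_of_nonneg_left (hf n) (poissonWeight_nonneg hc n)

lemma poissonExpect_le (hf : ∀ n, |f n| ≤ B) (hc : 0 ≤ c) : poissonExpect f c ≤ B := by
  unfold poissonExpect
  simpa using hasSum_le
    (fun n => mul_le_mul_of_nonneg_left ((le_abs_self _).trans (hf n)) (poissonWeight_nonneg hc n))
    (summable_poissonWeight_mul hf hc).hasSum ((hasSum_poissonWeight c).mul_right B)

lemma poissonExpect_pos (hf : ∀ n, |f n| ≤ B) (hf0 : ∀ n, 0 ≤ f n) (hpos : 0 < f 0)
    (hc : 0 ≤ c) : 0 < poissonExpect f c :=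
  (summable_poissonWeight_mul hf hc).tsum_pos
    (fun n => mul_nonneg (poissonWeight_nonneg hc n) (hf0 n)) 0
    (mul_pos (by simp [poissonWeight, Real.exp_pos]) hpos)

lemma continuous_poissonExpect (hf : ∀ n, |f n| ≤ B) : Continuous (poissonExpect f) := by
  refine continuous_iff_continuousAt.2 fun x => ?_
  obtain ⟨R, hxR⟩ : ∃ R, |x| < R := ⟨|x| + 1, lt_add_one _⟩
  have hu : Summable fun n : ℕ => Real.exp R * (R ^ n / n.factorial) * B :=
    ((Real.summable_pow_div_factorial R).mul_left _).mul_right B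
  have hR : ContinuousOn (fun y => ∑' n, poissonWeight y n * f n) (Set.Icc (-R) R) := by
    refine continuousOn_tsum (fun n => ?_) hu fun n y hy => ?_
    · unfold poissonWeight; fun_prop
    rw [Real.norm_eq_abs, abs_mul]
    have hw := abs_poissonWeight_le (abs_le.2 hy) n
    exact mul_le_mul hw (hf n) (abs_nonneg _) ((abs_nonneg _).trans hw)
  exact hR.continuousAt
    (Icc_mem_nhds (neg_lt.1 ((neg_le_abs x).trans_lt hxR)) ((le_abs_self x).trans_lt hxR))

end BoundedObservable

section AntitoneObservable

variable {f : ℕ → ℝ}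

lemma abs_le_apply_zero_of_antitone (hf : Antitone f) (hf0 : ∀ n, 0 ≤ f n) (n : ℕ) :
    |f n| ≤ f 0 :=
  (abs_of_nonneg (hf0 n)).trans_le (hf n.zero_le)

lemma poissonExpect_add_le (hf : Antitone f) (hf0 : ∀ n, 0 ≤ f n) {c d : ℝ}
    (hc : 0 ≤ c) (hd : 0 ≤ d) : poissonExpect f (c + d) ≤ poissonExpect f c := by
  have hbound := abs_le_apply_zero_of_antitone hf hf0
  set g := fun i => poissonWeight c i * f i
  set h := poissonWeight d
  have hg : Summable g := summable_poissonWeight_mul hbound hc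
  have hh : Summable h := (hasSum_poissonWeight d).summable
  have hgh : Summable fun ij : ℕ × ℕ => g ij.1 * h ij.2 :=
    hg.mul_of_nonneg hh (fun i => mul_nonneg (poissonWeight_nonneg hc i) (hf0 i))
      (poissonWeight_nonneg hd)
  calc poissonExpect f (c + d)
      ≤ ∑' n, ∑ ij ∈ antidiagonal n, g ij.1 * h ij.2 := by
        refine (summable_poissonWeight_mul hbound (add_nonneg hc hd)).tsum_le_tsum (fun n => ?_)
          (summable_sum_mul_antidiagonal_of_summable_mul hgh)
        rw [poissonWeight_add, sum_mul]
        refine sum_le_sum fun ij hij => ?_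
        rw [← mem_antidiagonal.mp hij, mul_right_comm]
        exact mul_le_mul_of_nonneg_right
          (mul_le_mul_of_nonneg_left (hf (Nat.le_add_right _ _)) (poissonWeight_nonneg hc _))
          (poissonWeight_nonneg hd _)
    _ = poissonExpect f c := by
        rw [← hg.tsum_mul_tsum_eq_tsum_sum_antidiagonal hh hgh, (hasSum_poissonWeight d).tsum_eq,
          mul_one]
        rfl

lemma antitoneOn_poissonExpect (hf : Antitone f) (hf0 : ∀ n, 0 ≤ f n) :
    AntitoneOn (poissonExpect f) (Set.Ici 0) := by
  intro c hc c' _ hcc'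
  simpa using poissonExpect_add_le hf hf0 hc (sub_nonneg.2 hcc')

end AntitoneObservable

lemma inv_pow_sub_one_div_one_sub {a : ℝ} (h0 : a ≠ 0) (h1 : a ≠ 1) (k : ℕ) :
    ((a ^ k)⁻¹ - 1) / (1 - a) = ∑ j ∈ range k, (a ^ (j + 1))⁻¹ := by
  induction k with
  | zero => simp
  | succ n ih =>
    have h1' : 1 - a ≠ 0 := sub_ne_zero.2 h1.symm
    rw [sum_range_succ, ← ih]
    field_simp
    ring

section MeanOffspring

variable {k : ℕ} {c : ℝ}

lemma alphaP_eq_poissonExpect (k : ℕ) :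
    alphaP k = poissonExpect fun n => ((n : ℝ) + 2 * k)⁻¹ := rfl

lemma abs_inv_add_two_mul_le_half (hk : 1 ≤ k) (n : ℕ) : |((n : ℝ) + 2 * k)⁻¹| ≤ 1 / 2 := by
  have h2 : (2 : ℝ) ≤ n + 2 * k := by
    have : (1 : ℝ) ≤ k := by exact_mod_cast hk
    linarith [n.cast_nonneg (α := ℝ)]
  rw [abs_of_pos (by positivity), one_div]
  exact inv_anti₀ two_pos h2

lemma antitone_inv_add_two_mul (hk : 1 ≤ k) : Antitone fun n : ℕ => ((n : ℝ) + 2 * k)⁻¹ :=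
  fun m n hmn => inv_anti₀ (by positivity) (by gcongr)

lemma alphaP_pos (hk : 1 ≤ k) (hc : 0 ≤ c) : 0 < alphaP k c := by
  rw [alphaP_eq_poissonExpect]
  exact poissonExpect_pos (abs_inv_add_two_mul_le_half hk) (fun n => by positivity)
    (by simpa using Nat.lt_of_succ_le hk) hc

lemma alphaP_le_half (hk : 1 ≤ k) (hc : 0 ≤ c) : alphaP k c ≤ 1 / 2 := by
  rw [alphaP_eq_poissonExpect]
  exact poissonExpect_le (abs_inv_add_two_mul_le_half hk) hc

lemma continuous_alphaP (hk : 1 ≤ k) : Continuous (alphaP k) := by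
  rw [alphaP_eq_poissonExpect]
  exact continuous_poissonExpect (abs_inv_add_two_mul_le_half hk)

lemma antitoneOn_alphaP (hk : 1 ≤ k) : AntitoneOn (alphaP k) (Set.Ici 0) := by
  rw [alphaP_eq_poissonExpect]
  exact antitoneOn_poissonExpect (antitone_inv_add_two_mul hk) fun n => by positivity

lemma alphaP_ne_one (hk : 1 ≤ k) (hc : 0 ≤ c) : alphaP k c ≠ 1 :=
  ((alphaP_le_half hk hc).trans_lt (by norm_num)).ne

lemma mfun_zero (k : ℕ) : mfun k 0 = 0 := by
  simp [mfun]

lemma mfun_eq_sum (hk : 1 ≤ k) (hc : 0 ≤ c) :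
    mfun k c = (1 + 2 * ∑ j ∈ range k, (alphaP k c ^ (j + 1))⁻¹) * c := by
  rw [mfun, mul_div_assoc,
    inv_pow_sub_one_div_one_sub (alphaP_pos hk hc).ne' (alphaP_ne_one hk hc)]

lemma continuousAt_mfun (hk : 1 ≤ k) (hc : 0 ≤ c) : ContinuousAt (mfun k) c := by
  have hα := (continuous_alphaP hk).continuousAt (x := c)
  have hpow : alphaP k c ^ k ≠ 0 := pow_ne_zero _ (alphaP_pos hk hc).ne'
  have hsub : 1 - alphaP k c ≠ 0 := sub_ne_zero.2 (alphaP_ne_one hk hc).symm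
  unfold mfun
  exact (continuousAt_const.add ((continuousAt_const.mul (((hα.pow k).inv₀ hpow).sub
    continuousAt_const)).div (continuousAt_const.sub hα) hsub)).mul continuousAt_id

lemma monotoneOn_mfun (hk : 1 ≤ k) : MonotoneOn (mfun k) (Set.Ici 0) := by
  intro a (ha : 0 ≤ a) b (hb : 0 ≤ b) hab
  rw [mfun_eq_sum hk ha, mfun_eq_sum hk hb]
  have hαb := alphaP_pos hk hb
  have hsum : ∑ j ∈ range k, (alphaP k a ^ (j + 1))⁻¹ ≤ ∑ j ∈ range k, (alphaP k b ^ (j + 1))⁻¹ :=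
    sum_le_sum fun j _ => inv_anti₀ (by positivity)
      (pow_le_pow_left₀ hαb.le (antitoneOn_alphaP hk ha hb hab) _)
  have hfactor : 0 ≤ 1 + 2 * ∑ j ∈ range k, (alphaP k b ^ (j + 1))⁻¹ := by positivity
  exact mul_le_mul (by linarith) hab ha hfactor

end MeanOffspring

theorem subcritical_mean_offspring (k : ℕ) (hk : 1 ≤ k) :
    (∀ c : ℝ, 0 ≤ c → ContinuousWithinAt (mfun k) (Set.Ici c) c) ∧
    MonotoneOn (mfun k) (Set.Ici (0 : ℝ)) ∧
    mfun k 0 = 0 ∧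
    ∃ c₁ : ℝ, 0 < c₁ ∧ ∀ c : ℝ, 0 ≤ c → c < c₁ → mfun k c < 1 := by
  refine ⟨fun c hc => (continuousAt_mfun hk hc).continuousWithinAt, monotoneOn_mfun hk,
    mfun_zero k, ?_⟩
  have hsmall : ∀ᶠ c in 𝓝[≥] 0, mfun k c < 1 :=
    ((continuousAt_mfun hk le_rfl).eventually_lt continuousAt_const
      (by rw [mfun_zero]; exact one_pos)).filter_mono nhdsWithin_le_nhds
  obtain ⟨c₁, hc₁, hsub⟩ := mem_nhdsGE_iff_exists_Ico_subset.mp hsmall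
  exact ⟨c₁, hc₁, fun c hc hcc₁ => hsub ⟨hc, hcc₁⟩⟩

end
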